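/- Let ρ ∈ (0,1), k ≥ 1 and ν ∈ ℝ^k with ν_1 ≥ ν_2 ≥ ⋯ ≥ ν_k. Let m(x) = φ(x)/Φ(x) be the inverse Mill's ratio and define H(t) = Σ_{j=1}^{k} m((t − ν_j)/√(1−ρ)) / m((t − ν_k)/√(1−ρ)) for t ∈ ℝ. Then H is differentiable with H'(t) ≥ 0 for all t ∈ ℝ, with strict inequality unless ν_1 = ν_2 = ⋯ = ν_k. -/

import Mathlib

open MeasureTheory ProbabilityTheory Filter
open scoped ENNReal

/-- The standard normal cumulative distribution function `Φ`. -/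
noncomputable def Phi (x : ℝ) : ℝ := ((gaussianReal 0 1) (Set.Iic x)).toReal

/-- The standard normal probability density function `φ`. -/
noncomputable def phiPDF (x : ℝ) : ℝ := gaussianPDFReal 0 1 x

/-- The joint law of `n` independent standard normal random variables. -/
noncomputable def stdGaussianPi (n : ℕ) : Measure (Fin n → ℝ) :=
  Measure.pi fun _ => gaussianReal 0 1

/-- The intraclass-correlation multivariate Gaussian vector `X ~ N(μ, Σ)` with
`Σ_{ij} = ρ + (1-ρ)δ_{ij}`, realized as `X_i = μ_i + √ρ Y_0 + √(1-ρ) Y_i` where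
`Y_0, …, Y_k` are independent standard normals (the coordinates of `ω`). -/
noncomputable def Xvec (ρ : ℝ) {k : ℕ} (μ : Fin k → ℝ) (i : Fin k) (ω : Fin (k+1) → ℝ) : ℝ :=
  μ i + Real.sqrt ρ * ω 0 + Real.sqrt (1-ρ) * ω i.succ

/-- The cumulative distribution function of `X* = max {X_1, …, X_k}`. -/
noncomputable def Fstar (ρ : ℝ) {k : ℕ} (μ : Fin k → ℝ) (x : ℝ) : ℝ :=
  (stdGaussianPi (k+1) {ω | (⨆ i, Xvec ρ μ i ω) ≤ x}).toReal

/-- The inverse Mill's ratio `m(x) = φ(x)/Φ(x)`. -/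
noncomputable def mills (x : ℝ) : ℝ := phiPDF x / Phi x

/-!
Since `m' = -m (x + m)`, the derivative of `u ↦ m(x(u)) / m(y(u))` with `x = (u - a)/s`,
`y = (u - b)/s` is `m(x)/m(y) · ((y + m(y)) - (x + m(x))) / s`, so every summand of `H` is
nondecreasing once `x ↦ x + m(x)` is increasing (strictly so for `ν_j > ν_k`).
That monotonicity is Sampford's inequality `m(x)(x + m(x)) < 1`, i.e. `Φ² - xφΦ - φ² > 0`.
This function vanishes at `-∞` and has derivative `φ (1 + x²) (Φ + xφ/(1 + x²))`, and in turn
`Φ + xφ/(1 + x²)` vanishes at `-∞` and has derivative `2φ/(1 + x²)² > 0`.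
-/

open Real Topology

lemma phiPDF_eq (x : ℝ) : phiPDF x = (√(2 * π))⁻¹ * rexp (-x ^ 2 / 2) := by
  simp [phiPDF, gaussianPDFReal]

lemma phiPDF_pos (x : ℝ) : 0 < phiPDF x := gaussianPDFReal_pos 0 1 x one_ne_zero

lemma hasDerivAt_phiPDF (x : ℝ) : HasDerivAt phiPDF (-x * phiPDF x) x := by
  have h := (((hasDerivAt_pow 2 x).fun_neg.div_const 2).exp).const_mul (√(2 * π))⁻¹
  rw [show phiPDF = fun y => (√(2 * π))⁻¹ * rexp (-y ^ 2 / 2) from funext phiPDF_eq]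
  exact h.congr_deriv (by norm_num; ring)

lemma tendsto_abs_rpow_mul_phiPDF_cocompact (s : ℝ) :
    Tendsto (fun x => |x| ^ s * phiPDF x) (cocompact ℝ) (𝓝 0) := by
  have h := (tendsto_rpow_abs_mul_exp_neg_mul_sq_cocompact one_half_pos s).const_mul (√(2 * π))⁻¹
  rw [mul_zero] at h
  refine h.congr fun x => ?_
  rw [phiPDF_eq]
  ring_nf

lemma tendsto_phiPDF_atBot : Tendsto phiPDF atBot (𝓝 0) := by
  simpa using (tendsto_abs_rpow_mul_phiPDF_cocompact 0).mono_left atBot_le_cocompact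

lemma tendsto_mul_phiPDF_atBot : Tendsto (fun x => x * phiPDF x) atBot (𝓝 0) := by
  refine tendsto_zero_iff_abs_tendsto_zero _ |>.2 ?_
  simpa [Function.comp_def, abs_mul, abs_of_pos (phiPDF_pos _)] using
    (tendsto_abs_rpow_mul_phiPDF_cocompact 1).mono_left atBot_le_cocompact

lemma Phi_eq_cdf : Phi = cdf (gaussianReal 0 1) := by
  ext x
  rw [cdf_eq_real]
  rfl

lemma tendsto_Phi_atBot : Tendsto Phi atBot (𝓝 0) := Phi_eq_cdf ▸ tendsto_cdf_atBot _

lemma Phi_pos (x : ℝ) : 0 < Phi x := by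
  refine ENNReal.toReal_pos (fun h => ?_) (measure_ne_top _ _)
  have := gaussianReal_absolutelyContinuous' 0 one_ne_zero h
  simp at this

lemma Phi_eq_integral (x : ℝ) : Phi x = ∫ t in Set.Iic x, phiPDF t := by
  rw [Phi, gaussianReal_apply_eq_integral 0 one_ne_zero, ENNReal.toReal_ofReal]
  · rfl
  · exact setIntegral_nonneg measurableSet_Iic fun t _ => (phiPDF_pos t).le

lemma hasDerivAt_Phi (x : ℝ) : HasDerivAt Phi (phiPDF x) x := by
  have hint : Integrable phiPDF := integrable_gaussianPDFReal 0 1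
  have hcont : Continuous phiPDF :=
    continuous_iff_continuousAt.2 fun y => (hasDerivAt_phiPDF y).continuousAt
  have hPhi : ∀ y, Phi y = Phi 0 + ∫ t in (0 : ℝ)..y, phiPDF t := fun y => by
    rw [Phi_eq_integral, Phi_eq_integral,
      ← intervalIntegral.integral_Iic_sub_Iic hint.integrableOn hint.integrableOn]
    ring
  rw [funext hPhi]
  exact (intervalIntegral.integral_hasDerivAt_right hint.intervalIntegrable
    hcont.aestronglyMeasurable.stronglyMeasurableAtFilter hcont.continuousAt).const_add _

lemma pos_of_hasDerivAt_pos_of_tendsto_atBot {f f' : ℝ → ℝ} (hf : ∀ x, HasDerivAt f (f' x) x)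
    (hf' : ∀ x, 0 < f' x) (hlim : Tendsto f atBot (𝓝 0)) (x : ℝ) : 0 < f x := by
  have hmono := strictMono_of_hasDerivAt_pos hf hf'
  calc 0 ≤ f (x - 1) := hmono.monotone.le_of_tendsto hlim (x - 1)
    _ < f x := hmono (by linarith)

lemma Phi_add_mul_phiPDF_div_pos (x : ℝ) : 0 < Phi x + x * phiPDF x / (1 + x ^ 2) := by
  refine pos_of_hasDerivAt_pos_of_tendsto_atBot (f := fun x => Phi x + x * phiPDF x / (1 + x ^ 2))
    (f' := fun x => 2 * phiPDF x / (1 + x ^ 2) ^ 2)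
    (fun x => ?_) (fun x => by have := phiPDF_pos x; positivity) ?_ x
  · have hD : 1 + x ^ 2 ≠ 0 := by positivity
    have h := (hasDerivAt_Phi x).fun_add (((hasDerivAt_id' x).fun_mul (hasDerivAt_phiPDF x)).fun_div
      ((hasDerivAt_pow 2 x).const_add 1) hD)
    exact h.congr_deriv (by field_simp; ring)
  · have hsq : Tendsto (fun x : ℝ => 1 + x ^ 2) atBot atTop :=
      tendsto_atTop_add_const_left _ 1
        (((tendsto_pow_atTop two_ne_zero).comp tendsto_neg_atBot_atTop).congr fun x => neg_sq x)
    simpa [div_eq_mul_inv] using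
      tendsto_Phi_atBot.add (tendsto_mul_phiPDF_atBot.mul (tendsto_inv_atTop_zero.comp hsq))

lemma Phi_sq_sub_mul_phiPDF_mul_Phi_sub_phiPDF_sq_pos (x : ℝ) :
    0 < Phi x ^ 2 - x * phiPDF x * Phi x - phiPDF x ^ 2 := by
  refine pos_of_hasDerivAt_pos_of_tendsto_atBot
    (f := fun x => Phi x ^ 2 - x * phiPDF x * Phi x - phiPDF x ^ 2)
    (f' := fun x => phiPDF x * (1 + x ^ 2) * (Phi x + x * phiPDF x / (1 + x ^ 2)))
    (fun x => ?_)
    (fun x => by have := phiPDF_pos x; have := Phi_add_mul_phiPDF_div_pos x; positivity) ?_ x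
  · have hD : 1 + x ^ 2 ≠ 0 := by positivity
    have h := (((hasDerivAt_Phi x).fun_pow 2).fun_sub (((hasDerivAt_id' x).fun_mul
      (hasDerivAt_phiPDF x)).fun_mul (hasDerivAt_Phi x))).fun_sub ((hasDerivAt_phiPDF x).fun_pow 2)
    exact h.congr_deriv (by field_simp; ring)
  · simpa using ((tendsto_Phi_atBot.pow 2).sub (tendsto_mul_phiPDF_atBot.mul tendsto_Phi_atBot)).sub
      (tendsto_phiPDF_atBot.pow 2)

lemma mills_pos (x : ℝ) : 0 < mills x := div_pos (phiPDF_pos x) (Phi_pos x)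

lemma mills_mul_add_mills_lt_one (x : ℝ) : mills x * (x + mills x) < 1 := by
  have hPhi := Phi_pos x
  have h : mills x * (x + mills x) = (x * phiPDF x * Phi x + phiPDF x ^ 2) / Phi x ^ 2 := by
    rw [mills]
    field_simp
  rw [h, div_lt_one (by positivity)]
  linarith [Phi_sq_sub_mul_phiPDF_mul_Phi_sub_phiPDF_sq_pos x]

lemma hasDerivAt_mills (x : ℝ) : HasDerivAt mills (-(mills x * (x + mills x))) x := by
  have hPhi := (Phi_pos x).ne'
  have h := (hasDerivAt_phiPDF x).div (hasDerivAt_Phi x) hPhi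
  exact h.congr_deriv (by simp only [mills]; field_simp; ring)

lemma strictMono_add_mills : StrictMono fun x => x + mills x :=
  strictMono_of_hasDerivAt_pos (fun x => (hasDerivAt_id x).add (hasDerivAt_mills x))
    fun x => by linarith [mills_mul_add_mills_lt_one x]

lemma exists_hasDerivAt_mills_div_mills {a b s : ℝ} (hs : 0 < s) (hba : b ≤ a) (t : ℝ) :
    ∃ d, HasDerivAt (fun u => mills ((u - a) / s) / mills ((u - b) / s)) d t ∧
      0 ≤ d ∧ (b < a → 0 < d) := by
  have hcomp (c : ℝ) : HasDerivAt (fun u => mills ((u - c) / s))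
      (-(mills ((t - c) / s) * ((t - c) / s + mills ((t - c) / s))) * (1 / s)) t :=
    (hasDerivAt_mills _).comp t (((hasDerivAt_id' t).sub_const c).div_const s)
  have h := (hcomp a).div (hcomp b) (mills_pos _).ne'
  have hxy : (t - a) / s ≤ (t - b) / s := by gcongr
  have hxy' : b < a → (t - a) / s < (t - b) / s := fun hlt => by gcongr
  generalize (t - a) / s = x at h hxy hxy'
  generalize (t - b) / s = y at h hxy hxy'
  have hx := mills_pos x
  have hy := mills_pos y
  refine ⟨mills x / mills y * (y + mills y - (x + mills x)) / s,
    h.congr_deriv (by field_simp; ring), ?_, fun hlt => ?_⟩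
  · have := sub_nonneg.2 (strictMono_add_mills.monotone hxy)
    positivity
  · have := sub_pos.2 (strictMono_add_mills (hxy' hlt))
    positivity

lemma Antitone.apply_last_lt_apply_zero {α : Type*} [LinearOrder α] {n : ℕ} {f : Fin (n + 1) → α}
    (hf : Antitone f) (h : ¬ ∀ i j, f i = f j) : f (Fin.last n) < f 0 := by
  refine lt_of_not_ge fun hle => h fun i j => ?_
  have hi : f i = f 0 := le_antisymm (hf (Fin.zero_le i)) (hle.trans (hf (Fin.le_last i)))
  have hj : f j = f 0 := le_antisymm (hf (Fin.zero_le j)) (hle.trans (hf (Fin.le_last j)))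
  rw [hi, hj]

/-- With `ν_1 ≥ ⋯ ≥ ν_k`, the function
`H(t) = ∑_j m((t-ν_j)/√(1-ρ)) / m((t-ν_k)/√(1-ρ))` is differentiable with
`H'(t) ≥ 0` for every `t`, strictly positive unless `ν_1 = ν_2 = ⋯ = ν_k`.
(Here `k = n + 1 ≥ 1` and the last coordinate plays the role of `ν_k`.) -/
theorem stmt17 (n : ℕ) (ρ : ℝ) (hρ : ρ ∈ Set.Ioo (0:ℝ) 1)
    (ν : Fin (n+1) → ℝ) (hord : ∀ i j : Fin (n+1), i ≤ j → ν j ≤ ν i) :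
    ∀ t : ℝ, ∃ d : ℝ,
      HasDerivAt (fun u => ∑ j, mills ((u - ν j) / Real.sqrt (1-ρ)) /
          mills ((u - ν (Fin.last n)) / Real.sqrt (1-ρ))) d t ∧
      0 ≤ d ∧ (¬ (∀ i j : Fin (n+1), ν i = ν j) → 0 < d) := by
  intro t
  have hs : 0 < √(1 - ρ) := Real.sqrt_pos.2 (by linarith [hρ.2])
  choose d hd using fun j =>
    exists_hasDerivAt_mills_div_mills hs (hord j (Fin.last n) (Fin.le_last j)) t
  refine ⟨∑ j, d j, HasDerivAt.fun_sum fun j _ => (hd j).1,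
    Finset.sum_nonneg fun j _ => (hd j).2.1, fun hne => ?_⟩
  exact Finset.sum_pos' (fun j _ => (hd j).2.1)
    ⟨0, Finset.mem_univ _, (hd 0).2.2 (Antitone.apply_last_lt_apply_zero hord hne)⟩
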